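/- Let μ be a Radon measure on ℝ and consider the integral operator T on L²(ℝ, μ) given by Tf(x) = ∫_ℝ (1 + min(|x|, |y|)) f(y) dμ(y). For n ∈ ℤ set I_n = [2^{n−1}, 2^n] for n > 0, I_0 = [−1, 1], I_n = [−2^{|n|}, −2^{|n|−1}] for n < 0, and α_n = 2^{|n|} μ(I_n). Then the operator norm of T on L²(ℝ, μ) satisfies ‖T‖ ≤ 64 · sup_{n ∈ ℤ} α_n. -/

import Mathlib

open MeasureTheory ENNReal

noncomputable section

/-- The intervals `I_n = [2^{n−1}, 2^n]` for `n > 0`, `I_0 = [−1, 1]`,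
`I_n = [−2^{|n|}, −2^{|n|−1}]` for `n < 0`. -/
def Iint (n : ℤ) : Set ℝ :=
  if 0 < n then Set.Icc ((2 : ℝ) ^ (n - 1)) ((2 : ℝ) ^ n)
  else if n = 0 then Set.Icc (-1) 1
  else Set.Icc (-(2 : ℝ) ^ (-n)) (-(2 : ℝ) ^ (-n - 1))

/-- `α_n = 2^{|n|} μ(I_n)`. -/
def alphaCoef (μ : Measure ℝ) (n : ℤ) : ℝ≥0∞ := 2 ^ n.natAbs * μ (Iint n)


/-!
Since `f` is not assumed measurable, the integrals are lower Lebesgue integrals, so the argument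
only ever splits them along measurable partitions. Sort points into dyadic rings according to
`r(x) = ⌊log₂ (1 + |x|)⌋`. The kernel is at most `2 ^ (min (r x) (r y) + 1)`, which turns `T|f|`
into a function of `r x` and the problem into one about a matrix on `ℕ`. The ring `{r = m}` is
covered by the `I_n` with `|n| ≥ m`, so its measure is at most `4 S 2⁻ᵐ`, `S = sup α_n`. After
Cauchy–Schwarz on each ring, the matrix entries are `√μ(R_m) 2^(min m ℓ + 1) √μ(R_ℓ) ≤ 8 S 2^(-|m-ℓ|/2)`,
whose row and column sums are at most `64 S`, and Schur's test gives the bound.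
-/

open Set

namespace ENNReal

lemma rpow_one_half_sq (x : ℝ≥0∞) : (x ^ (1 / 2 : ℝ)) ^ 2 = x := by
  simpa [one_div] using ENNReal.rpow_inv_natCast_pow two_ne_zero x

lemma sq_rpow_one_half (x : ℝ≥0∞) : (x ^ 2) ^ (1 / 2 : ℝ) = x := by
  simpa [one_div] using ENNReal.pow_rpow_inv_natCast two_ne_zero x

end ENNReal

lemma sq_lintegral_le_measure_univ_mul_lintegral_sq {α : Type*} [MeasurableSpace α]
    (μ : Measure α) (g : α → ℝ≥0∞) : (∫⁻ x, g x ∂μ) ^ 2 ≤ μ univ * ∫⁻ x, g x ^ 2 ∂μ := by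
  obtain ⟨φ, hφ, hφg, hφeq⟩ := exists_measurable_le_lintegral_eq μ g
  have hHolder := ENNReal.lintegral_mul_le_Lp_mul_Lq μ Real.HolderConjugate.two_two
    (f := fun _ => 1) aemeasurable_const hφ.aemeasurable
  simp only [Pi.mul_apply, one_mul, one_pow, lintegral_const, ENNReal.rpow_two] at hHolder
  calc (∫⁻ x, g x ∂μ) ^ 2 ≤ ((μ univ) ^ (1 / 2 : ℝ) * (∫⁻ x, φ x ^ 2 ∂μ) ^ (1 / 2 : ℝ)) ^ 2 := by
        rw [hφeq]; exact pow_le_pow_left' hHolder 2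
    _ = μ univ * ∫⁻ x, φ x ^ 2 ∂μ := by rw [mul_pow, rpow_one_half_sq, rpow_one_half_sq]
    _ ≤ μ univ * ∫⁻ x, g x ^ 2 ∂μ := by gcongr with x; exact hφg x

lemma lintegral_eq_tsum_setLIntegral_fiber {α ι : Type*} [MeasurableSpace α] [MeasurableSpace ι]
    [Countable ι] [MeasurableSingletonClass ι] (μ : Measure α) {r : α → ι} (hr : Measurable r)
    (g : α → ℝ≥0∞) : ∫⁻ x, g x ∂μ = ∑' i, ∫⁻ x in r ⁻¹' {i}, g x ∂μ := by
  rw [← lintegral_iUnion (fun i => hr (measurableSet_singleton i)) (pairwise_disjoint_fiber r),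
    ← preimage_iUnion, iUnion_of_singleton, preimage_univ, Measure.restrict_univ]

lemma lintegral_comp_eq_tsum_mul_measure_fiber {α ι : Type*} [MeasurableSpace α]
    [MeasurableSpace ι] [Countable ι] [MeasurableSingletonClass ι] (μ : Measure α) {r : α → ι}
    (hr : Measurable r) (F : ι → ℝ≥0∞) :
    ∫⁻ x, F (r x) ∂μ = ∑' i, F i * μ (r ⁻¹' {i}) := by
  rw [lintegral_eq_tsum_setLIntegral_fiber μ hr]
  refine tsum_congr fun i => ?_
  rw [setLIntegral_congr_fun (hr (measurableSet_singleton i)) (fun x (hx : r x = i) => by rw [hx]),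
    setLIntegral_const]

namespace ENNReal

lemma sq_tsum_mul_le {ι : Type*} (c u : ι → ℝ≥0∞) :
    (∑' i, c i * u i) ^ 2 ≤ (∑' i, c i) * ∑' i, c i * u i ^ 2 := by
  let _ : MeasurableSpace ι := ⊤
  set ν : Measure ι := Measure.sum fun i => c i • Measure.dirac i
  have hν : ∀ g : ι → ℝ≥0∞, ∫⁻ i, g i ∂ν = ∑' i, c i * g i := fun g => by
    simp [ν, lintegral_sum_measure, lintegral_dirac' _ measurable_from_top]
  simpa [hν, ← lintegral_one] using sq_lintegral_le_measure_univ_mul_lintegral_sq ν u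

lemma tsum_sq_tsum_mul_le {ι κ : Type*} (a : ι → κ → ℝ≥0∞) (v : κ → ℝ≥0∞) {A B : ℝ≥0∞}
    (hrow : ∀ i, ∑' j, a i j ≤ A) (hcol : ∀ j, ∑' i, a i j ≤ B) :
    ∑' i, (∑' j, a i j * v j) ^ 2 ≤ A * B * ∑' j, v j ^ 2 :=
  calc ∑' i, (∑' j, a i j * v j) ^ 2 ≤ ∑' i, A * ∑' j, a i j * v j ^ 2 :=
        ENNReal.tsum_le_tsum fun i => (sq_tsum_mul_le _ _).trans (by gcongr; exact hrow i)
    _ = A * ∑' j, (∑' i, a i j) * v j ^ 2 := by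
        rw [ENNReal.tsum_mul_left, ENNReal.tsum_comm]
        simp_rw [ENNReal.tsum_mul_right]
    _ ≤ A * ∑' j, B * v j ^ 2 := by gcongr with j; exact hcol j
    _ = A * B * ∑' j, v j ^ 2 := by rw [ENNReal.tsum_mul_left, mul_assoc]

lemma tsum_pow_dist_le (r : ℝ≥0∞) (m : ℕ) : ∑' ℓ, r ^ Nat.dist m ℓ ≤ 2 * ∑' k, r ^ k := by
  have hinj : Function.Injective fun ℓ => (Nat.dist m ℓ, decide (ℓ < m)) := by
    intro a b h
    simp only [Prod.mk.injEq, decide_eq_decide, Nat.dist] at h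
    omega
  calc ∑' ℓ, r ^ Nat.dist m ℓ ≤ ∑' p : ℕ × Bool, r ^ p.1 :=
        ENNReal.tsum_comp_le_tsum_of_injective hinj fun p => r ^ p.1
    _ = 2 * ∑' k, r ^ k := by rw [ENNReal.tsum_prod']; simp only [tsum_bool, ENNReal.tsum_add, two_mul]

lemma tsum_pow_le_four {r : ℝ≥0∞} (hr : r ^ 2 ≤ 2⁻¹) : ∑' k : ℕ, r ^ k ≤ 4 := by
  have hr' : r ≤ 1 - 4⁻¹ := by
    refine (ENNReal.pow_le_pow_left_iff two_ne_zero).1 (hr.trans ?_)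
    rw [← ENNReal.toReal_le_toReal (by simp) (by simp)]
    norm_num [ENNReal.toReal_sub_of_le]
  rw [ENNReal.tsum_geometric, ENNReal.inv_le_iff_inv_le]
  calc (4 : ℝ≥0∞)⁻¹ = 1 - (1 - 4⁻¹) := (ENNReal.sub_sub_cancel (by simp) (by simp)).symm
    _ ≤ 1 - r := by gcongr

end ENNReal

lemma two_pow_log_floor_le {y : ℝ} (hy : 1 ≤ y) : (2 : ℝ) ^ Nat.log 2 ⌊y⌋₊ ≤ y :=
  calc (2 : ℝ) ^ Nat.log 2 ⌊y⌋₊ = ((2 ^ Nat.log 2 ⌊y⌋₊ : ℕ) : ℝ) := by push_cast; rfl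
    _ ≤ ⌊y⌋₊ := by exact_mod_cast Nat.pow_log_le_self 2 (Nat.floor_pos.2 hy).ne'
    _ ≤ y := Nat.floor_le (by linarith)

lemma lt_two_pow_log_floor_succ (y : ℝ) : y < (2 : ℝ) ^ (Nat.log 2 ⌊y⌋₊ + 1) :=
  calc y < ⌊y⌋₊ + 1 := Nat.lt_floor_add_one y
    _ ≤ ((2 ^ (Nat.log 2 ⌊y⌋₊ + 1) : ℕ) : ℝ) := by
      exact_mod_cast Nat.lt_pow_succ_log_self one_lt_two _
    _ = (2 : ℝ) ^ (Nat.log 2 ⌊y⌋₊ + 1) := by push_cast; rfl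

def ringIndex (x : ℝ) : ℕ := Nat.log 2 ⌊1 + |x|⌋₊

lemma two_pow_ringIndex_le (x : ℝ) : (2 : ℝ) ^ ringIndex x ≤ 1 + |x| :=
  two_pow_log_floor_le (by linarith [abs_nonneg x])

lemma lt_two_pow_ringIndex_succ (x : ℝ) : 1 + |x| < (2 : ℝ) ^ (ringIndex x + 1) :=
  lt_two_pow_log_floor_succ _

lemma measurable_ringIndex : Measurable ringIndex :=
  measurable_from_top.comp (Nat.measurable_floor.comp (measurable_const.add measurable_abs))

lemma ringIndex_mono {x y : ℝ} (h : |x| ≤ |y|) : ringIndex x ≤ ringIndex y :=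
  Nat.log_mono_right (Nat.floor_mono (by linarith))

lemma one_add_min_abs_le_two_pow (x y : ℝ) :
    1 + min |x| |y| ≤ (2 : ℝ) ^ (min (ringIndex x) (ringIndex y) + 1) := by
  rcases le_total |x| |y| with h | h
  · rw [min_eq_left h, min_eq_left (ringIndex_mono h)]
    exact (lt_two_pow_ringIndex_succ x).le
  · rw [min_eq_right h, min_eq_right (ringIndex_mono h)]
    exact (lt_two_pow_ringIndex_succ y).le

lemma mem_Iint_natCast {n : ℕ} (hn : 0 < n) {y : ℝ} :
    y ∈ Iint n ↔ (2 : ℝ) ^ (n - 1) ≤ y ∧ y ≤ 2 ^ n := by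
  have : ((n : ℤ) - 1) = ((n - 1 : ℕ) : ℤ) := by omega
  rw [Iint, if_pos (by exact_mod_cast hn), this, zpow_natCast, zpow_natCast, mem_Icc]

lemma mem_Iint_neg_iff (n : ℕ) (x : ℝ) : x ∈ Iint (-n) ↔ -x ∈ Iint n := by
  rcases Nat.eq_zero_or_pos n with rfl | hn
  · simp only [Iint, CharP.cast_eq_zero, neg_zero, lt_irrefl, if_false, if_true, mem_Icc]
    constructor <;> rintro ⟨h₁, h₂⟩ <;> constructor <;> linarith
  · have h₁ : ¬ (0 : ℤ) < -n := by omega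
    have h₂ : (-n : ℤ) ≠ 0 := by omega
    rw [mem_Iint_natCast hn]
    simp only [Iint, h₁, h₂, if_false, neg_neg, mem_Icc]
    have : ((n : ℤ) - 1) = ((n - 1 : ℕ) : ℤ) := by omega
    rw [this, zpow_natCast, zpow_natCast]
    constructor <;> rintro ⟨h₁, h₂⟩ <;> constructor <;> linarith

lemma exists_mem_Iint_of_two_pow_le {m : ℕ} {y : ℝ} (hy : 0 ≤ y) (h : (2 : ℝ) ^ m ≤ 1 + y) :
    ∃ n : ℕ, m ≤ n ∧ y ∈ Iint n := by
  rcases lt_or_ge y 1 with hy1 | hy1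
  · have hmem : y ∈ Iint (0 : ℕ) := by
      rw [Nat.cast_zero, Iint, if_neg (lt_irrefl 0), if_pos rfl]
      exact ⟨by linarith, hy1.le⟩
    refine ⟨0, ?_, hmem⟩
    have : (2 : ℝ) ^ m < 2 ^ 1 := by linarith
    have := (pow_lt_pow_iff_right₀ (one_lt_two : (1 : ℝ) < 2)).1 this
    omega
  · set j := Nat.log 2 ⌊y⌋₊
    have hlow := two_pow_log_floor_le hy1
    have hup := lt_two_pow_log_floor_succ y
    refine ⟨j + 1, ?_, (mem_Iint_natCast j.succ_pos).2 ⟨hlow, hup.le⟩⟩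
    have : (2 : ℝ) ^ m < 2 ^ (j + 2) := by
      calc (2 : ℝ) ^ m ≤ 1 + y := h
        _ < 2 * 2 ^ (j + 1) := by linarith
        _ = 2 ^ (j + 2) := by ring
    have := (pow_lt_pow_iff_right₀ (one_lt_two : (1 : ℝ) < 2)).1 this
    omega

lemma measure_Iint_le (μ : Measure ℝ) (n : ℤ) :
    μ (Iint n) ≤ 2⁻¹ ^ n.natAbs * ⨆ k, alphaCoef μ k := by
  rw [← ENNReal.inv_pow, ← ENNReal.mul_le_iff_le_inv (by simp) (by simp)]
  exact le_iSup (alphaCoef μ) n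

lemma measure_ringIndex_fiber_le (μ : Measure ℝ) (m : ℕ) :
    μ (ringIndex ⁻¹' {m}) ≤ 4 * (⨆ n, alphaCoef μ n) * 2⁻¹ ^ m := by
  set S := ⨆ n, alphaCoef μ n
  have hcover : ringIndex ⁻¹' {m} ⊆ ⋃ k : ℕ, (Iint (m + k : ℕ) ∪ Iint (-(m + k : ℕ) : ℤ)) := by
    intro x hx
    obtain ⟨n, hmn, hn⟩ :=
      exists_mem_Iint_of_two_pow_le (abs_nonneg x) (hx ▸ two_pow_ringIndex_le x)
    refine mem_iUnion.2 ⟨n - m, ?_⟩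
    rw [Nat.add_sub_cancel' hmn]
    rcases le_total 0 x with h | h
    · exact Or.inl (by rwa [abs_of_nonneg h] at hn)
    · exact Or.inr (by rwa [mem_Iint_neg_iff, ← abs_of_nonpos h])
  calc μ (ringIndex ⁻¹' {m})
      ≤ ∑' k : ℕ, (μ (Iint (m + k : ℕ)) + μ (Iint (-(m + k : ℕ) : ℤ))) :=
        (measure_mono hcover).trans <| (measure_iUnion_le _).trans <|
          ENNReal.tsum_le_tsum fun k => measure_union_le _ _
    _ ≤ ∑' k : ℕ, 2 * S * 2⁻¹ ^ m * 2⁻¹ ^ k := by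
        refine ENNReal.tsum_le_tsum fun k => ?_
        have h₁ := measure_Iint_le μ (m + k : ℕ)
        have h₂ := measure_Iint_le μ (-(m + k : ℕ) : ℤ)
        rw [Int.natAbs_natCast] at h₁
        rw [Int.natAbs_neg, Int.natAbs_natCast] at h₂
        calc _ ≤ 2⁻¹ ^ (m + k) * S + 2⁻¹ ^ (m + k) * S := add_le_add h₁ h₂
          _ = _ := by rw [pow_add]; ring
    _ = 4 * S * 2⁻¹ ^ m := by
        rw [ENNReal.tsum_mul_left, ENNReal.tsum_geometric, ENNReal.one_sub_inv_two, inv_inv]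
        ring

lemma lintegral_one_add_min_abs_mul_le (μ : Measure ℝ) (f : ℝ → ℝ) (x : ℝ) :
    ∫⁻ y, ENNReal.ofReal ((1 + min |x| |y|) * |f y|) ∂μ ≤
      ∑' ℓ, 2 ^ (min (ringIndex x) ℓ + 1) *
        ∫⁻ y in ringIndex ⁻¹' {ℓ}, ENNReal.ofReal |f y| ∂μ := by
  rw [lintegral_eq_tsum_setLIntegral_fiber μ measurable_ringIndex]
  refine ENNReal.tsum_le_tsum fun ℓ => ?_
  rw [← lintegral_const_mul' _ _ (by simp)]
  refine setLIntegral_mono' (measurable_ringIndex (measurableSet_singleton ℓ)) fun y hy => ?_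
  rw [ENNReal.ofReal_mul (by positivity), ← show ringIndex y = ℓ from hy]
  gcongr
  calc ENNReal.ofReal (1 + min |x| |y|)
      ≤ ENNReal.ofReal (2 ^ (min (ringIndex x) (ringIndex y) + 1)) :=
        ENNReal.ofReal_le_ofReal (one_add_min_abs_le_two_pow x y)
    _ = 2 ^ (min (ringIndex x) (ringIndex y) + 1) := by simp [ENNReal.ofReal_pow]

lemma inv_two_pow_mul_inv_two_pow_mul_sq_two_pow_min (m ℓ : ℕ) :
    (2⁻¹ : ℝ≥0∞) ^ m * 2⁻¹ ^ ℓ * (2 ^ min m ℓ) ^ 2 = 2⁻¹ ^ Nat.dist m ℓ := by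
  have hsplit : m + ℓ = Nat.dist m ℓ + 2 * min m ℓ := by unfold Nat.dist; omega
  rw [← pow_add, hsplit, pow_add, mul_assoc, ← pow_mul', pow_mul, pow_mul, ← mul_pow, ← mul_pow,
    ENNReal.inv_mul_cancel two_ne_zero ENNReal.ofNat_ne_top, one_pow, one_pow, mul_one]

lemma tsum_inv_sqrt_two_pow_dist_le (m : ℕ) :
    ∑' ℓ, ((2⁻¹ : ℝ≥0∞) ^ (1 / 2 : ℝ)) ^ Nat.dist m ℓ ≤ 8 :=
  calc _ ≤ 2 * 4 := (ENNReal.tsum_pow_dist_le _ m).trans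
        (by gcongr; exact ENNReal.tsum_pow_le_four (rpow_one_half_sq _).le)
    _ = 8 := by norm_num

lemma rpow_one_half_mul_two_pow_min_mul_rpow_one_half_le {S : ℝ≥0∞} {ρ : ℕ → ℝ≥0∞}
    (hρ : ∀ m, ρ m ≤ 4 * S * 2⁻¹ ^ m) (m ℓ : ℕ) :
    ρ m ^ (1 / 2 : ℝ) * 2 ^ (min m ℓ + 1) * ρ ℓ ^ (1 / 2 : ℝ)
      ≤ 8 * S * ((2⁻¹ : ℝ≥0∞) ^ (1 / 2 : ℝ)) ^ Nat.dist m ℓ := by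
  rw [← ENNReal.pow_le_pow_left_iff two_ne_zero]
  calc (ρ m ^ (1 / 2 : ℝ) * 2 ^ (min m ℓ + 1) * ρ ℓ ^ (1 / 2 : ℝ)) ^ 2
      = ρ m * ρ ℓ * 4 * (2 ^ min m ℓ) ^ 2 := by
        rw [mul_pow, mul_pow, rpow_one_half_sq, rpow_one_half_sq]; ring
    _ ≤ (4 * S * 2⁻¹ ^ m) * (4 * S * 2⁻¹ ^ ℓ) * 4 * (2 ^ min m ℓ) ^ 2 := by
        gcongr <;> apply hρ
    _ = (8 * S) ^ 2 * (2⁻¹ ^ m * 2⁻¹ ^ ℓ * (2 ^ min m ℓ) ^ 2) := by ring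
    _ = (8 * S * ((2⁻¹ : ℝ≥0∞) ^ (1 / 2 : ℝ)) ^ Nat.dist m ℓ) ^ 2 := by
        rw [inv_two_pow_mul_inv_two_pow_mul_sq_two_pow_min, mul_pow _ (_ ^ _), ← pow_mul,
          mul_comm (Nat.dist m ℓ), pow_mul, rpow_one_half_sq]

lemma tsum_sq_tsum_two_pow_min_mul_le {S : ℝ≥0∞} {ρ d q : ℕ → ℝ≥0∞}
    (hρ : ∀ m, ρ m ≤ 4 * S * 2⁻¹ ^ m) (hd : ∀ ℓ, d ℓ ^ 2 ≤ ρ ℓ * q ℓ) :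
    ∑' m, (∑' ℓ, 2 ^ (min m ℓ + 1) * d ℓ) ^ 2 * ρ m ≤ (64 * S) ^ 2 * ∑' ℓ, q ℓ := by
  set w : ℕ → ℝ≥0∞ := fun m => ρ m ^ (1 / 2 : ℝ)
  set v : ℕ → ℝ≥0∞ := fun ℓ => q ℓ ^ (1 / 2 : ℝ)
  set a : ℕ → ℕ → ℝ≥0∞ := fun m ℓ => 8 * S * ((2⁻¹ : ℝ≥0∞) ^ (1 / 2 : ℝ)) ^ Nat.dist m ℓ
  have hdw : ∀ ℓ, d ℓ ≤ w ℓ * v ℓ := fun ℓ => by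
    rw [← ENNReal.pow_le_pow_left_iff two_ne_zero, mul_pow, rpow_one_half_sq, rpow_one_half_sq]
    exact hd ℓ
  have hrow : ∀ m, ∑' ℓ, a m ℓ ≤ 64 * S := fun m =>
    calc ∑' ℓ, a m ℓ ≤ 8 * S * 8 := by
          rw [ENNReal.tsum_mul_left]; gcongr; exact tsum_inv_sqrt_two_pow_dist_le m
      _ = 64 * S := by ring
  calc ∑' m, (∑' ℓ, 2 ^ (min m ℓ + 1) * d ℓ) ^ 2 * ρ m
      = ∑' m, (∑' ℓ, w m * 2 ^ (min m ℓ + 1) * d ℓ) ^ 2 := by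
        refine tsum_congr fun m => ?_
        rw [← rpow_one_half_sq (ρ m), ← mul_pow, mul_comm, ← ENNReal.tsum_mul_left]
        simp only [w, mul_assoc]
    _ ≤ ∑' m, (∑' ℓ, a m ℓ * v ℓ) ^ 2 := by
        refine ENNReal.tsum_le_tsum fun m => pow_le_pow_left' (ENNReal.tsum_le_tsum fun ℓ => ?_) 2
        calc w m * 2 ^ (min m ℓ + 1) * d ℓ ≤ w m * 2 ^ (min m ℓ + 1) * w ℓ * v ℓ := by
              rw [mul_assoc _ (w ℓ)]; gcongr; exact hdw ℓ
          _ ≤ a m ℓ * v ℓ := by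
              gcongr ?_ * _; exact rpow_one_half_mul_two_pow_min_mul_rpow_one_half_le hρ m ℓ
    _ ≤ 64 * S * (64 * S) * ∑' ℓ, v ℓ ^ 2 :=
        ENNReal.tsum_sq_tsum_mul_le a v hrow fun ℓ => by
          simpa only [a, Nat.dist_comm] using hrow ℓ
    _ = (64 * S) ^ 2 * ∑' ℓ, q ℓ := by simp_rw [v, rpow_one_half_sq, sq]

theorem statement19_general (μ : Measure ℝ) (f : ℝ → ℝ) :
    (∫⁻ x, (∫⁻ y, ENNReal.ofReal ((1 + min |x| |y|) * |f y|) ∂μ) ^ (2 : ℕ) ∂μ) ^ (1 / 2 : ℝ)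
      ≤ 64 * (⨆ n : ℤ, alphaCoef μ n) *
          (∫⁻ x, ENNReal.ofReal (f x ^ 2) ∂μ) ^ (1 / 2 : ℝ) := by
  set S := ⨆ n : ℤ, alphaCoef μ n
  set R : ℕ → Set ℝ := fun ℓ => ringIndex ⁻¹' {ℓ}
  set G : ℝ → ℝ≥0∞ := fun y => ENNReal.ofReal |f y|
  have hG : ∀ y, ENNReal.ofReal (f y ^ 2) = G y ^ 2 := fun y => by
    rw [← sq_abs, ENNReal.ofReal_pow (abs_nonneg _)]
  have hsq : ∫⁻ x, (∫⁻ y, ENNReal.ofReal ((1 + min |x| |y|) * |f y|) ∂μ) ^ 2 ∂μ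
      ≤ (64 * S) ^ 2 * ∫⁻ x, ENNReal.ofReal (f x ^ 2) ∂μ :=
    calc _ ≤ ∫⁻ x, (∑' ℓ, 2 ^ (min (ringIndex x) ℓ + 1) * ∫⁻ y in R ℓ, G y ∂μ) ^ 2 ∂μ :=
          lintegral_mono fun x => pow_le_pow_left' (lintegral_one_add_min_abs_mul_le μ f x) 2
      _ = ∑' m, (∑' ℓ, 2 ^ (min m ℓ + 1) * ∫⁻ y in R ℓ, G y ∂μ) ^ 2 * μ (R m) :=
          lintegral_comp_eq_tsum_mul_measure_fiber μ measurable_ringIndex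
            (fun m => (∑' ℓ, 2 ^ (min m ℓ + 1) * ∫⁻ y in R ℓ, G y ∂μ) ^ 2)
      _ ≤ (64 * S) ^ 2 * ∑' ℓ, ∫⁻ y in R ℓ, G y ^ 2 ∂μ :=
          tsum_sq_tsum_two_pow_min_mul_le (measure_ringIndex_fiber_le μ) fun ℓ => by
            simpa using sq_lintegral_le_measure_univ_mul_lintegral_sq (μ.restrict (R ℓ)) G
      _ = (64 * S) ^ 2 * ∫⁻ x, ENNReal.ofReal (f x ^ 2) ∂μ := by
          simp only [hG, lintegral_eq_tsum_setLIntegral_fiber μ measurable_ringIndex (G · ^ 2), R]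
  calc _ ≤ ((64 * S) ^ 2 * ∫⁻ x, ENNReal.ofReal (f x ^ 2) ∂μ) ^ (1 / 2 : ℝ) :=
        ENNReal.rpow_le_rpow hsq (by norm_num)
    _ = _ := by rw [ENNReal.mul_rpow_of_nonneg _ _ (by norm_num), sq_rpow_one_half]

/-- **Lemma 5.1**: let `μ` be a Radon measure on `ℝ` and `T` the integral operator
`Tf(x) = ∫_ℝ (1 + min(|x|,|y|)) f(y) dμ(y)` on `L²(ℝ, μ)`. Then the operator norm of `T`
satisfies `‖T‖ ≤ 64 sup_n α_n` (possibly `+∞`); equivalently, since the kernel is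
non-negative, for every `f` one has `‖T|f|‖_{L²(μ)} ≤ 64 (sup_n α_n) ‖f‖_{L²(μ)}`. -/
theorem statement19 (μ : Measure ℝ) [IsLocallyFiniteMeasure μ] (f : ℝ → ℝ) :
    (∫⁻ x, (∫⁻ y, ENNReal.ofReal ((1 + min |x| |y|) * |f y|) ∂μ) ^ (2 : ℕ) ∂μ) ^ (1 / 2 : ℝ)
      ≤ 64 * (⨆ n : ℤ, alphaCoef μ n) *
          (∫⁻ x, ENNReal.ofReal (f x ^ 2) ∂μ) ^ (1 / 2 : ℝ) :=
  statement19_general μ f
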